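/- Let a, b, c, d ∈ ℂ satisfy c(|a|² + |d|²) = −a d b̄, |a|² + |b|² + |d|² = 1, with a and d not both zero, and let E be the 3×3 matrix with rows (0, 2a, 2b), (0, 2c, 2d), (0, 0, 0). Then for every unit complex number w, the vector v(w) = (w̄ a + b d̄, 1 − |b|², b̄ a + w d̄)ᵀ satisfies Φ(w̄E) v(w) = v(w), i.e. v(w) is an eigenvector of (1/2)(w̄E + wE*) for the eigenvalue 1, and ‖v(w)‖² = 2(1 − |b|²)(1 − 2 Re(w̄ c)). -/

import Mathlib

/-!
With `s = |a|² + |d|² = 1 - |b|²` the constraint reads `cs = -adb̄`. In the middle coordinate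
of `Φ(w̄E) v(w)` the terms `w̄cs` and `wc̄s` then cancel the cross terms `w̄adb̄` and `wād̄b`,
and in `‖v(w)‖²` the cross terms `2 Re(w̄adb̄) = -2s Re(w̄c)` produce the factor `1 - 2 Re(w̄c)`;
everything else is `|w| = 1` and `|a|² + |b|² + |d|² = 1`.
-/

open Matrix

/-- The Hermitian part `Φ(A) = (A + A*)/2`. -/
noncomputable def hermPart {n : ℕ} (A : Matrix (Fin n) (Fin n) ℂ) :
    Matrix (Fin n) (Fin n) ℂ :=
  (1 / 2 : ℂ) • (A + Aᴴ)

open ComplexConjugate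

lemma hermPart_smul_diskMatrix (a b c d w : ℂ) :
    hermPart (conj w • !![0, 2 * a, 2 * b; 0, 2 * c, 2 * d; 0, 0, 0]) =
      !![0, conj w * a, conj w * b;
        w * conj a, conj w * c + w * conj c, conj w * d;
        w * conj b, w * conj d, 0] := by
  ext i j
  fin_cases i <;> fin_cases j <;> simp [hermPart] <;> ring

/-- The vector `v(w)`. -/
noncomputable def diskVector (a b d w : ℂ) : Fin 3 → ℂ :=
  ![conj w * a + b * conj d, 1 - (‖b‖ : ℂ) ^ 2, conj b * a + w * conj d]

section

variable {a b c d w : ℂ}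

lemma hermPart_smul_diskMatrix_mulVec_diskVector (hw : conj w * w = 1)
    (hN : a * conj a + b * conj b + d * conj d = 1)
    (hc : c * (a * conj a + d * conj d) = -(a * d * conj b)) :
    hermPart (conj w • !![0, 2 * a, 2 * b; 0, 2 * c, 2 * d; 0, 0, 0]) *ᵥ diskVector a b d w =
      diskVector a b d w := by
  rw [hermPart_smul_diskMatrix]
  have hc' : conj c * (conj a * a + conj d * d) = -(conj a * conj d * b) := by
    simpa using congrArg conj hc
  ext i
  fin_cases i <;>
    simp [diskVector, mulVec, dotProduct, Fin.sum_univ_three, ← Complex.mul_conj']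
  · linear_combination (b * conj d) * hw
  · linear_combination (a * conj a + d * conj d) * hw + (1 - w * conj c - conj w * c) * hN
      + conj w * hc + w * hc'
  · linear_combination (conj b * a) * hw

lemma sum_norm_sq_diskVector (hw : conj w * w = 1)
    (hN : a * conj a + b * conj b + d * conj d = 1)
    (hc : c * (a * conj a + d * conj d) = -(a * d * conj b)) :
    ∑ i, ‖diskVector a b d w i‖ ^ 2 = 2 * (1 - ‖b‖ ^ 2) * (1 - 2 * (conj w * c).re) := by
  have hc' : conj c * (conj a * a + conj d * d) = -(conj a * conj d * b) := by
    simpa using congrArg conj hc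
  apply Complex.ofReal_injective
  push_cast
  rw [Complex.re_eq_add_conj]
  simp only [diskVector, Fin.sum_univ_three, ← Complex.mul_conj', cons_val_zero, cons_val_one,
    cons_val, map_add, map_sub, map_mul, map_one, Complex.conj_conj]
  linear_combination (a * conj a + d * conj d) * hw
    + (1 + b * conj b - 2 * (conj w * c + w * conj c)) * hN + 2 * conj w * hc + 2 * w * hc'

end

theorem eigenvector_of_disk_matrix_general (a b c d : ℂ)
    (habcd : c * (((‖a‖) ^ 2 + (‖d‖) ^ 2 : ℝ) : ℂ)
      = -(a * d * starRingEnd ℂ b))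
    (hnorm : (‖a‖) ^ 2 + (‖b‖) ^ 2 + (‖d‖) ^ 2 = 1)
    (w : ℂ) (hw : ‖w‖ = 1) :
    (hermPart ((starRingEnd ℂ w) •
        !![0, 2 * a, 2 * b; 0, 2 * c, 2 * d; 0, 0, 0])).mulVec
      ![starRingEnd ℂ w * a + b * starRingEnd ℂ d,
        1 - (‖b‖ : ℂ) ^ 2,
        starRingEnd ℂ b * a + w * starRingEnd ℂ d]
      = ![starRingEnd ℂ w * a + b * starRingEnd ℂ d,
          1 - (‖b‖ : ℂ) ^ 2,
          starRingEnd ℂ b * a + w * starRingEnd ℂ d] ∧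
    ∑ i : Fin 3, (‖(![starRingEnd ℂ w * a + b * starRingEnd ℂ d,
           1 - (‖b‖ : ℂ) ^ 2,
           starRingEnd ℂ b * a + w * starRingEnd ℂ d] i)‖) ^ 2
      = 2 * (1 - (‖b‖) ^ 2) * (1 - 2 * (starRingEnd ℂ w * c).re) := by
  have hw' : conj w * w = 1 := by simp [Complex.conj_mul', hw]
  have hN : a * conj a + b * conj b + d * conj d = 1 := by
    simpa [Complex.mul_conj'] using congrArg ((↑) : ℝ → ℂ) hnorm
  have hc : c * (a * conj a + d * conj d) = -(a * d * conj b) := by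
    simpa [Complex.mul_conj'] using habcd
  exact ⟨hermPart_smul_diskMatrix_mulVec_diskVector hw' hN hc, sum_norm_sq_diskVector hw' hN hc⟩

theorem eigenvector_of_disk_matrix (a b c d : ℂ)
    (habcd : c * (((‖a‖) ^ 2 + (‖d‖) ^ 2 : ℝ) : ℂ)
      = -(a * d * starRingEnd ℂ b))
    (hnorm : (‖a‖) ^ 2 + (‖b‖) ^ 2 + (‖d‖) ^ 2 = 1)
    (hnz : ¬(a = 0 ∧ d = 0))
    (w : ℂ) (hw : ‖w‖ = 1) :
    (hermPart ((starRingEnd ℂ w) •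
        !![0, 2 * a, 2 * b; 0, 2 * c, 2 * d; 0, 0, 0])).mulVec
      ![starRingEnd ℂ w * a + b * starRingEnd ℂ d,
        1 - (‖b‖ : ℂ) ^ 2,
        starRingEnd ℂ b * a + w * starRingEnd ℂ d]
      = ![starRingEnd ℂ w * a + b * starRingEnd ℂ d,
          1 - (‖b‖ : ℂ) ^ 2,
          starRingEnd ℂ b * a + w * starRingEnd ℂ d] ∧
    ∑ i : Fin 3, (‖(![starRingEnd ℂ w * a + b * starRingEnd ℂ d,
           1 - (‖b‖ : ℂ) ^ 2,
           starRingEnd ℂ b * a + w * starRingEnd ℂ d] i)‖) ^ 2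
      = 2 * (1 - (‖b‖) ^ 2) * (1 - 2 * (starRingEnd ℂ w * c).re) :=
  eigenvector_of_disk_matrix_general a b c d habcd hnorm w hw
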